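/- Let X_j, Y_j (j = 1,…,N) be finite-dimensional systems, X := ⊗_j X_j, Y := ⊗_j Y_j, and let J be a positive semidefinite matrix on X⊗Y with L^NS_{XY}(J) = J. Suppose a real number m and Hermitian matrices E, F on X⊗Y satisfy: tr[E·J] ≥ m; tr_X E = I_Y; 0 ⪯ E ⪯ F; L^NS_{XY}(F) = (m/d_X)·I_{XY}. Suppose Hermitian matrices M on X⊗Y and N on Y satisfy: L^NS_{XY}(M) ⪰ 0 and L^NS_{XY}(M) + I_X⊗N ⪰ (1 + tr[M]/d_X)·J. Then m ≤ tr[N]. -/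

import Mathlib

/-!
STATEMENT 11: Weak duality between the primal and dual SDPs for the one-shot zero-error
classical capacity assisted by free general supermaps: for J ⪰ 0 with L^NS(J) = J,
any primal feasible (m, E, F) and dual feasible (M, N) satisfy m ≤ tr N.
-/

open Matrix Kronecker
open scoped ComplexOrder

namespace ICO

variable {N' : ℕ} {κX κY : Fin N' → Type}
  [∀ j, Fintype (κX j)] [∀ j, DecidableEq (κX j)]
  [∀ j, Fintype (κY j)] [∀ j, DecidableEq (κY j)]

/-- Smoothing over the factor `Y j`. -/
noncomputable def floorY (j : Fin N')
    (P : Matrix ((∀ i, κX i) × (∀ i, κY i)) ((∀ i, κX i) × (∀ i, κY i)) ℂ) :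
    Matrix ((∀ i, κX i) × (∀ i, κY i)) ((∀ i, κX i) × (∀ i, κY i)) ℂ :=
  Matrix.of fun p q =>
    if p.2 j = q.2 j then
      (Fintype.card (κY j) : ℂ)⁻¹ *
        ∑ c : κY j, P (p.1, Function.update p.2 j c) (q.1, Function.update q.2 j c)
    else 0

/-- Smoothing over the factors `X j ⊗ Y j`. -/
noncomputable def floorXY (j : Fin N')
    (P : Matrix ((∀ i, κX i) × (∀ i, κY i)) ((∀ i, κX i) × (∀ i, κY i)) ℂ) :
    Matrix ((∀ i, κX i) × (∀ i, κY i)) ((∀ i, κX i) × (∀ i, κY i)) ℂ :=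
  Matrix.of fun p q =>
    if p.1 j = q.1 j ∧ p.2 j = q.2 j then
      ((Fintype.card (κX j) : ℂ) * (Fintype.card (κY j) : ℂ))⁻¹ *
        ∑ a : κX j, ∑ c : κY j,
          P (Function.update p.1 j a, Function.update p.2 j c)
            (Function.update q.1 j a, Function.update q.2 j c)
    else 0

/-- `L^NS_{X_jY_j}(P) := P − ⌊Y_j⌋P + ⌊X_jY_j⌋P`. -/
noncomputable def LNSstep (j : Fin N')
    (P : Matrix ((∀ i, κX i) × (∀ i, κY i)) ((∀ i, κX i) × (∀ i, κY i)) ℂ) :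
    Matrix ((∀ i, κX i) × (∀ i, κY i)) ((∀ i, κX i) × (∀ i, κY i)) ℂ :=
  P - floorY j P + floorXY j P

/-- `L^NS_{XY} := L^NS_{X₁Y₁} ∘ ⋯ ∘ L^NS_{X_NY_N}`. -/
noncomputable def LNS
    (P : Matrix ((∀ i, κX i) × (∀ i, κY i)) ((∀ i, κX i) × (∀ i, κY i)) ℂ) :
    Matrix ((∀ i, κX i) × (∀ i, κY i)) ((∀ i, κX i) × (∀ i, κY i)) ℂ :=
  (List.finRange N').foldr (fun j Q => LNSstep j Q) P

end ICO

/-!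
Both smoothing maps `⌊S⌋` are conjugations `P ↦ d⁻¹ ∑ K P K'` by a family of matrix units that
is closed under `K ↔ K'`, so they are symmetric for the trace pairing `(P, Q) ↦ tr (P Q)`, and
they fix the identity; the maps attached to different factors commute. Hence `L := L^NS_{XY}` is
symmetric, unital and trace preserving. With `s := tr M = tr L(M) ≥ 0`, pairing the dual
constraint with `E ⪰ 0` and the primal constraint `F - E ⪰ 0` with `L(M) ⪰ 0` gives
`(1 + s/d_X) m ≤ tr[L(M) E] + tr N ≤ tr[M L(F)] + tr N = (m/d_X) s + tr N`.
-/

theorem Matrix.PosSemidef.trace_mul_nonneg {𝕜 n : Type*} [RCLike 𝕜] [Fintype n]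
    {A B : Matrix n n 𝕜} (hA : A.PosSemidef) (hB : B.PosSemidef) : 0 ≤ (A * B).trace := by
  classical
  open scoped MatrixOrder in
  obtain ⟨C, rfl⟩ := CStarAlgebra.nonneg_iff_eq_star_mul_self.mp hB.nonneg
  rw [← Matrix.mul_assoc, trace_mul_cycle]
  exact (hA.mul_mul_conjTranspose_same C).trace_nonneg

theorem Matrix.trace_one_kronecker_mul {R m n : Type*} [CommSemiring R] [Fintype m]
    [DecidableEq m] [Fintype n] (N : Matrix n n R) (E : Matrix (m × n) (m × n) R) :
    ((1 : Matrix m m R) ⊗ₖ N * E).trace = (N * of fun y y' => ∑ x, E (x, y) (x, y')).trace := by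
  simp only [trace, diag, mul_apply, kroneckerMap_apply, Fintype.sum_prod_type, one_apply,
    ite_mul, one_mul, zero_mul, Finset.sum_ite_irrel, Finset.sum_const_zero, Finset.sum_ite_eq,
    Finset.mem_univ, if_true, of_apply, Finset.mul_sum]
  rw [Finset.sum_comm]
  exact Finset.sum_congr rfl fun _ _ => Finset.sum_comm

theorem Matrix.trace_sum_mul_mul_mul_symm {R n ι : Type*} [CommSemiring R] [Fintype n]
    [Fintype ι] (K L : ι → Matrix n n R) (σ : ι ≃ ι) (hK : ∀ i, K (σ i) = L i)
    (hL : ∀ i, L (σ i) = K i) (P Q : Matrix n n R) :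
    ((∑ i, K i * P * L i) * Q).trace = (P * ∑ i, K i * Q * L i).trace := by
  simp only [Finset.sum_mul, Finset.mul_sum, trace_sum]
  rw [← σ.sum_comp]
  refine Finset.sum_congr rfl fun i _ => ?_
  rw [hK, hL, Matrix.mul_assoc, Matrix.mul_assoc, trace_mul_comm, Matrix.mul_assoc,
    Matrix.mul_assoc]

theorem List.foldr_apply_comm {ι α : Type*} {f : ι → α → α} {a : ι}
    (h : ∀ j x, f j (f a x) = f a (f j x)) (l : List ι) (x : α) :
    l.foldr f (f a x) = f a (l.foldr f x) := by
  induction l with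
  | nil => rfl
  | cons b l ih => rw [foldr_cons, ih, h, foldr_cons]

theorem List.foldr_pairing_symm {ι α R : Type*} (B : α → α → R) {f : ι → α → α}
    (hsymm : ∀ j x y, B (f j x) y = B x (f j y)) (hcomm : ∀ j k x, f j (f k x) = f k (f j x))
    (l : List ι) (x y : α) : B (l.foldr f x) y = B x (l.foldr f y) := by
  induction l generalizing y with
  | nil => rfl
  | cons a l ih =>
    rw [foldr_cons, hsymm, ih, foldr_apply_comm fun j x => hcomm j a x, foldr_cons]

/-- `coord` reads off the component of an index in a tensor factor `A` and `put` overwrites it;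
the laws say that `n ≃ R × A` for some `R`, with `coord` the projection and `put` the update. -/
structure IsLens {n A : Type*} (coord : n → A) (put : n → A → n) : Prop where
  coord_put : ∀ p a, coord (put p a) = a
  put_put : ∀ p a b, put (put p a) b = put p b
  put_coord : ∀ p, put p (coord p) = p

namespace IsLens

variable {n A : Type*} {coord : n → A} {put : n → A → n}

theorem update {ι : Type*} [DecidableEq ι] {β : ι → Type*} (j : ι) :
    IsLens (fun f : ∀ i, β i => f j) (fun f c => Function.update f j c) where
  coord_put _ _ := Function.update_self ..
  put_put _ _ _ := Function.update_idem ..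
  put_coord _ := Function.update_eq_self ..

theorem snd {α : Type*} (h : IsLens coord put) :
    IsLens (fun x : α × n => coord x.2) (fun x a => (x.1, put x.2 a)) where
  coord_put _ _ := h.coord_put ..
  put_put _ _ _ := by rw [h.put_put]
  put_coord _ := by rw [h.put_coord]

theorem prod {m B : Type*} {coord' : m → B} {put' : m → B → m} (h : IsLens coord put)
    (h' : IsLens coord' put') :
    IsLens (fun x : n × m => (coord x.1, coord' x.2))
      (fun x a => (put x.1 a.1, put' x.2 a.2)) where
  coord_put _ _ := by rw [h.coord_put, h'.coord_put]
  put_put _ _ _ := by rw [h.put_put, h'.put_put]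
  put_coord _ := by rw [h.put_coord, h'.put_coord]

theorem put_eq_put_iff (h : IsLens coord put) {p q : n} (hpq : coord p = coord q) (a : A) :
    put p a = put q a ↔ p = q := by
  refine ⟨fun hput => ?_, fun hpq => hpq ▸ rfl⟩
  rw [← h.put_coord p, ← h.put_coord q, ← h.put_put p a, hput, h.put_put, hpq]

theorem eq_put_iff (h : IsLens coord put) {p r : n} {b c : A} :
    p = put r b ∧ coord r = c ↔ r = put p c ∧ coord p = b := by
  constructor <;> rintro ⟨rfl, rfl⟩ <;> simp [h.coord_put, h.put_put, h.put_coord]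

end IsLens

namespace Matrix

section LensKraus

variable {R n A : Type*} [Semiring R] [Fintype n] [DecidableEq n] [DecidableEq A]
  {coord : n → A} {put : n → A → n}

variable (coord put) in
/-- The operator `|b⟩⟨c| ⊗ I` on the factor exposed by the lens. -/
def lensKraus (b c : A) : Matrix n n R :=
  of fun p q => if p = put q b ∧ coord q = c then 1 else 0

theorem lensKraus_mul_apply (h : IsLens coord put) (b c : A) (P : Matrix n n R) (p q : n) :
    ((lensKraus coord put b c : Matrix n n R) * P) p q =
      if coord p = b then P (put p c) q else 0 := by
  simp only [mul_apply, lensKraus, of_apply, h.eq_put_iff, ite_mul, one_mul, zero_mul, ite_and]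
  split_ifs <;> simp

theorem mul_lensKraus_apply (b c : A) (P : Matrix n n R) (p q : n) :
    (P * (lensKraus coord put b c : Matrix n n R)) p q =
      if coord q = c then P p (put q b) else 0 := by
  simp only [mul_apply, lensKraus, of_apply, mul_ite, mul_one, mul_zero, ite_and]
  split_ifs <;> simp

end LensKraus

section Smoothing

variable {R n A : Type*} [Field R] [Fintype A] [DecidableEq A]

/-- The smoothing `⌊A⌋ P = (tr_A P) ⊗ I_A / d_A` over the factor exposed by `coord`, `put`. -/
def smoothing (coord : n → A) (put : n → A → n) : Module.End R (Matrix n n R) where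
  toFun P := of fun p q =>
    if coord p = coord q then (Fintype.card A : R)⁻¹ * ∑ a, P (put p a) (put q a) else 0
  map_add' P Q := by
    ext p q
    by_cases h : coord p = coord q <;> simp [h, Finset.sum_add_distrib, mul_add]
  map_smul' c P := by
    ext p q
    by_cases h : coord p = coord q <;> simp [h, Finset.mul_sum, mul_left_comm]

theorem smoothing_apply (coord : n → A) (put : n → A → n) (P : Matrix n n R) (p q : n) :
    smoothing coord put P p q =
      if coord p = coord q then (Fintype.card A : R)⁻¹ * ∑ a, P (put p a) (put q a) else 0 :=
  rfl

variable {coord : n → A} {put : n → A → n}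

theorem smoothing_commute {B : Type*} [Fintype B] [DecidableEq B] {coord' : n → B}
    {put' : n → B → n} (hcoord : ∀ p b, coord (put' p b) = coord p)
    (hcoord' : ∀ p a, coord' (put p a) = coord' p)
    (hput : ∀ p a b, put (put' p b) a = put' (put p a) b) :
    Commute (smoothing coord put : Module.End R (Matrix n n R)) (smoothing coord' put') := by
  refine LinearMap.ext fun P => Matrix.ext fun p q => ?_
  simp only [Module.End.mul_apply, smoothing_apply, hcoord, hcoord', hput]
  by_cases h : coord p = coord q <;> by_cases h' : coord' p = coord' q <;>
    simp only [h, h', if_true, if_false, mul_zero, Finset.sum_const_zero]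
  simp only [Finset.mul_sum]
  rw [Finset.sum_comm]
  exact Finset.sum_congr rfl fun _ _ => Finset.sum_congr rfl fun _ _ => by ring

variable [DecidableEq n]

theorem smoothing_one [CharZero R] (h : IsLens coord put) :
    smoothing coord put (1 : Matrix n n R) = 1 := by
  ext p q
  rw [smoothing_apply]
  split_ifs with hpq
  · have : Nonempty A := ⟨coord p⟩
    have hA : (Fintype.card A : R) ≠ 0 := Nat.cast_ne_zero.mpr Fintype.card_ne_zero
    simp only [one_apply, h.put_eq_put_iff hpq, Finset.sum_const, Finset.card_univ, nsmul_eq_mul]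
    split_ifs <;> simp [hA]
  · rw [one_apply_ne fun h' => hpq (congrArg coord h')]

variable [Fintype n]

theorem smoothing_eq_sum_lensKraus (h : IsLens coord put) (P : Matrix n n R) :
    smoothing coord put P = (Fintype.card A : R)⁻¹ •
      ∑ bc : A × A, lensKraus coord put bc.1 bc.2 * P * lensKraus coord put bc.2 bc.1 := by
  ext p q
  simp only [smoothing_apply, smul_apply, sum_apply, mul_lensKraus_apply,
    lensKraus_mul_apply h, Fintype.sum_prod_type, smul_eq_mul]
  rw [Finset.sum_comm]
  simp only [Finset.sum_ite_eq, Finset.mem_univ, if_true, Finset.sum_ite_irrel,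
    Finset.sum_const_zero, mul_ite, mul_zero]

theorem trace_smoothing_mul (h : IsLens coord put) (P Q : Matrix n n R) :
    (smoothing coord put P * Q).trace = (P * smoothing coord put Q).trace := by
  rw [smoothing_eq_sum_lensKraus h, smoothing_eq_sum_lensKraus h, smul_mul, Matrix.mul_smul,
    trace_smul, trace_smul, trace_sum_mul_mul_mul_symm (fun bc => lensKraus coord put bc.1 bc.2)
      (fun bc => lensKraus coord put bc.2 bc.1) (Equiv.prodComm A A) (fun _ => rfl) (fun _ => rfl)]

end Smoothing

end Matrix

namespace ICO

variable {N' : ℕ} {κX κY : Fin N' → Type}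
  [∀ j, Fintype (κX j)] [∀ j, DecidableEq (κX j)]
  [∀ j, Fintype (κY j)] [∀ j, DecidableEq (κY j)]

noncomputable abbrev floorYₗ (j : Fin N') :
    Module.End ℂ (Matrix ((∀ i, κX i) × (∀ i, κY i)) ((∀ i, κX i) × (∀ i, κY i)) ℂ) :=
  smoothing (fun p => p.2 j) (fun p c => (p.1, Function.update p.2 j c))

noncomputable abbrev floorXYₗ (j : Fin N') :
    Module.End ℂ (Matrix ((∀ i, κX i) × (∀ i, κY i)) ((∀ i, κX i) × (∀ i, κY i)) ℂ) :=
  smoothing (fun p => (p.1 j, p.2 j))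
    (fun p s => (Function.update p.1 j s.1, Function.update p.2 j s.2))

noncomputable def LNSstepₗ (j : Fin N') :
    Module.End ℂ (Matrix ((∀ i, κX i) × (∀ i, κY i)) ((∀ i, κX i) × (∀ i, κY i)) ℂ) :=
  1 - floorYₗ j + floorXYₗ j

theorem floorXY_eq_floorXYₗ (j : Fin N')
    (P : Matrix ((∀ i, κX i) × (∀ i, κY i)) ((∀ i, κX i) × (∀ i, κY i)) ℂ) :
    floorXY j P = floorXYₗ j P := by
  ext p q
  simp only [floorXY, of_apply, smoothing_apply, Prod.mk.injEq, Fintype.sum_prod_type,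
    Fintype.card_prod, Nat.cast_mul]

theorem LNS_eq_foldr
    (P : Matrix ((∀ i, κX i) × (∀ i, κY i)) ((∀ i, κX i) × (∀ i, κY i)) ℂ) :
    LNS P = (List.finRange N').foldr (fun j => LNSstepₗ j) P := by
  have hstep : (fun j Q => LNSstep j Q) = fun j => ⇑(LNSstepₗ (κX := κX) (κY := κY) j) := by
    ext j Q : 2
    rw [LNSstep, floorXY_eq_floorXYₗ]
    rfl
  rw [LNS, hstep]

theorem commute_LNSstepₗ (j k : Fin N') :
    Commute (LNSstepₗ (κX := κX) (κY := κY) j) (LNSstepₗ k) := by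
  rcases eq_or_ne j k with rfl | hjk
  · exact Commute.refl _
  have hYY : Commute (floorYₗ (κX := κX) (κY := κY) j) (floorYₗ k) :=
    smoothing_commute (fun _ _ => Function.update_of_ne hjk ..)
      (fun _ _ => Function.update_of_ne hjk.symm ..)
      (fun _ _ _ => by simp only [Function.update_comm hjk])
  have hYXY : ∀ {j k : Fin N'}, j ≠ k →
      Commute (floorYₗ (κX := κX) (κY := κY) j) (floorXYₗ k) := fun hjk =>
    smoothing_commute (fun _ _ => Function.update_of_ne hjk ..)
      (fun _ _ => by simp only [Function.update_of_ne hjk.symm])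
      (fun _ _ _ => by simp only [Function.update_comm hjk])
  have hXYXY : Commute (floorXYₗ (κX := κX) (κY := κY) j) (floorXYₗ k) :=
    smoothing_commute (fun _ _ => by simp only [Function.update_of_ne hjk])
      (fun _ _ => by simp only [Function.update_of_ne hjk.symm])
      (fun _ _ _ => by simp only [Function.update_comm hjk])
  have hcommStep : ∀ T, Commute T (floorYₗ k) → Commute T (floorXYₗ k) →
      Commute T (LNSstepₗ (κX := κX) (κY := κY) k) := fun T hY hXY =>
    ((Commute.one_right T).sub_right hY).add_right hXY
  exact ((Commute.one_left _).sub_left (hcommStep _ hYY (hYXY hjk))).add_left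
    (hcommStep _ (hYXY hjk.symm).symm hXYXY)

theorem trace_LNSstepₗ_mul (j : Fin N')
    (P Q : Matrix ((∀ i, κX i) × (∀ i, κY i)) ((∀ i, κX i) × (∀ i, κY i)) ℂ) :
    (LNSstepₗ j P * Q).trace = (P * LNSstepₗ j Q).trace := by
  simp only [LNSstepₗ, LinearMap.add_apply, LinearMap.sub_apply, Module.End.one_apply,
    Matrix.add_mul, Matrix.sub_mul, Matrix.mul_add, Matrix.mul_sub, trace_add, trace_sub,
    trace_smoothing_mul (IsLens.update j).snd,
    trace_smoothing_mul ((IsLens.update j).prod (IsLens.update j))]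

theorem LNSstepₗ_one (j : Fin N') : LNSstepₗ (κX := κX) (κY := κY) j 1 = 1 := by
  simp only [LNSstepₗ, LinearMap.add_apply, LinearMap.sub_apply, Module.End.one_apply,
    smoothing_one (IsLens.update j).snd, smoothing_one ((IsLens.update j).prod (IsLens.update j)),
    sub_self, zero_add]

theorem trace_LNS_mul
    (P Q : Matrix ((∀ i, κX i) × (∀ i, κY i)) ((∀ i, κX i) × (∀ i, κY i)) ℂ) :
    (LNS P * Q).trace = (P * LNS Q).trace := by
  rw [LNS_eq_foldr, LNS_eq_foldr]
  exact List.foldr_pairing_symm (fun P Q => (P * Q).trace) trace_LNSstepₗ_mul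
    (fun j k P => LinearMap.congr_fun (commute_LNSstepₗ j k).eq P) _ P Q

theorem LNS_one :
    LNS (1 : Matrix ((∀ i, κX i) × (∀ i, κY i)) ((∀ i, κX i) × (∀ i, κY i)) ℂ) = 1 := by
  rw [LNS_eq_foldr]
  exact List.foldr_fixed' LNSstepₗ_one _

theorem trace_LNS (P : Matrix ((∀ i, κX i) × (∀ i, κY i)) ((∀ i, κX i) × (∀ i, κY i)) ℂ) :
    (LNS P).trace = P.trace := by
  simpa [LNS_one] using trace_LNS_mul P 1

theorem zero_error_capacity_weak_duality_general
    (J E F M : Matrix ((∀ i, κX i) × (∀ i, κY i)) ((∀ i, κX i) × (∀ i, κY i)) ℂ)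
    (Nd : Matrix (∀ i, κY i) (∀ i, κY i) ℂ) (m : ℝ)
    -- primal feasibility
    (hEJ : m ≤ ((E * J).trace).re)
    (hEY : (Matrix.of fun (y y' : ∀ i, κY i) => ∑ x : ∀ i, κX i, E (x, y) (x, y')) = 1)
    (hEpos : E.PosSemidef) (hEF : (F - E).PosSemidef)
    (hFns : LNS F = ((m : ℂ) / (Fintype.card (∀ i, κX i) : ℂ)) • 1)
    -- dual feasibility
    (hMpos : (LNS M).PosSemidef)
    (hdual : (LNS M + (1 : Matrix (∀ i, κX i) (∀ i, κX i) ℂ) ⊗ₖ Nd -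
        ((1 : ℂ) + M.trace / (Fintype.card (∀ i, κX i) : ℂ)) • J).PosSemidef) :
    m ≤ (Nd.trace).re := by
  set d : ℝ := (Fintype.card (∀ i, κX i) : ℝ)
  have hM0 : 0 ≤ M.trace := trace_LNS M ▸ hMpos.trace_nonneg
  set s := M.trace.re
  have hs : 0 ≤ s := (Complex.nonneg_iff.1 hM0).1
  have htrM : M.trace = s := Complex.eq_re_of_ofReal_le (by rwa [Complex.ofReal_zero])
  have hprimal : (LNS M * E).trace.re ≤ m / d * s := by
    have h := hMpos.trace_mul_nonneg hEF
    rw [Matrix.mul_sub, trace_sub, trace_LNS_mul, hFns, Matrix.mul_smul, Matrix.mul_one,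
      trace_smul, htrM, smul_eq_mul, sub_nonneg,
      show (m : ℂ) / (Fintype.card (∀ i, κX i) : ℂ) * s = (m / d * s : ℝ) by push_cast; rfl] at h
    simpa using (Complex.le_def.1 h).1
  have hdualE : (1 + s / d) * (E * J).trace.re ≤ (LNS M * E).trace.re + Nd.trace.re := by
    have h := hdual.trace_mul_nonneg hEpos
    rw [Matrix.sub_mul, Matrix.add_mul, Matrix.smul_mul, trace_sub, trace_add, trace_smul,
      trace_one_kronecker_mul, hEY, Matrix.mul_one, htrM, trace_mul_comm J, smul_eq_mul,
      sub_nonneg,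
      show (1 : ℂ) + s / (Fintype.card (∀ i, κX i) : ℂ) = (1 + s / d : ℝ) by push_cast; rfl] at h
    simpa [Complex.re_ofReal_mul] using (Complex.le_def.1 h).1
  have hcoef : 0 ≤ 1 + s / d := by positivity
  have hexpand : (1 + s / d) * m = m + m / d * s := by ring
  linarith [mul_le_mul_of_nonneg_left hEJ hcoef]

theorem zero_error_capacity_weak_duality
    (J E F M : Matrix ((∀ i, κX i) × (∀ i, κY i)) ((∀ i, κX i) × (∀ i, κY i)) ℂ)
    (Nd : Matrix (∀ i, κY i) (∀ i, κY i) ℂ) (m : ℝ)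
    (hJpsd : J.PosSemidef) (hJns : LNS J = J)
    (hE : E.IsHermitian) (hF : F.IsHermitian) (hM : M.IsHermitian) (hN : Nd.IsHermitian)
    -- primal feasibility
    (hEJ : m ≤ ((E * J).trace).re)
    (hEY : (Matrix.of fun (y y' : ∀ i, κY i) => ∑ x : ∀ i, κX i, E (x, y) (x, y')) = 1)
    (hEpos : E.PosSemidef) (hEF : (F - E).PosSemidef)
    (hFns : LNS F = ((m : ℂ) / (Fintype.card (∀ i, κX i) : ℂ)) • 1)
    -- dual feasibility
    (hMpos : (LNS M).PosSemidef)
    (hdual : (LNS M + (1 : Matrix (∀ i, κX i) (∀ i, κX i) ℂ) ⊗ₖ Nd -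
        ((1 : ℂ) + M.trace / (Fintype.card (∀ i, κX i) : ℂ)) • J).PosSemidef) :
    m ≤ (Nd.trace).re :=
  zero_error_capacity_weak_duality_general J E F M Nd m hEJ hEY hEpos hEF hFns hMpos hdual

end ICO
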